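/- Let R be a commutative Noetherian local ring and let M, N be finitely generated R-modules with pd_R(M) = 1 and N torsion-free. Then Tor_i^R(M, N) = 0 for all i ≥ 1. -/

import Mathlib

open CategoryTheory

noncomputable section

abbrev TorGroup (R : Type) [CommRing R] (i : ℕ) (M N : ModuleCat.{0} R) : ModuleCat R :=
  ((Tor (ModuleCat.{0} R) i).obj M).obj N

open CategoryTheory.Limits MonoidalCategory TensorProduct LinearMap

theorem iap_iff {R M : Type*} [CommRing R] [IsNoetherianRing R] [AddCommGroup M] [Module R M]
    {I : Ideal R} : IsAssociatedPrime I M ↔ I.IsPrime ∧ ∃ x : M, I = (R ∙ x).annihilator := by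
  rw [isAssociatedPrime_iff]
  have h : ∀ x : M, Submodule.colon (⊥ : Submodule R M) {x} = (R ∙ x).annihilator := fun x => by
    ext r
    rw [Submodule.mem_colon_singleton, Submodule.mem_bot, Submodule.mem_annihilator_span_singleton]
  simp only [h]

section Ass
variable {R : Type*} [CommRing R] {M : Type*} [AddCommGroup M] [Module R M]

theorem ass_subset_union [IsNoetherianRing R] (N : Submodule R M) :
    associatedPrimes R M ⊆ associatedPrimes R N ∪ associatedPrimes R (M ⧸ N) := by
  rintro p hpa
  obtain ⟨hp, x, hx⟩ := iap_iff.mp hpa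
  have hmem : ∀ r : R, r ∈ p ↔ r • x = 0 := by
    intro r
    rw [hx, Submodule.mem_annihilator_span_singleton]
  by_cases h : ∀ c : R, c • x ∈ N → c • x = 0
  · right
    refine iap_iff.mpr ⟨hp, N.mkQ x, ?_⟩
    ext r
    rw [Submodule.mem_annihilator_span_singleton, hmem]
    constructor
    · intro hr
      rw [← map_smul, hr, map_zero]
    · intro hr
      rw [← map_smul] at hr
      exact h r ((Submodule.Quotient.mk_eq_zero N).mp hr)
  · left
    push_neg at h
    obtain ⟨c, hcN, hc0⟩ := h
    refine iap_iff.mpr ⟨hp, ⟨c • x, hcN⟩, ?_⟩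
    have hcp : c ∉ p := fun hcp => hc0 ((hmem c).mp hcp)
    ext r
    rw [Submodule.mem_annihilator_span_singleton]
    rw [show (r • (⟨c • x, hcN⟩ : N) = 0) ↔ r • (c • x) = 0 from
      Subtype.ext_iff.trans (by rfl)]
    rw [smul_smul, ← hmem]
    constructor
    · intro hr
      exact Ideal.mul_mem_right c p hr
    · intro hr
      rcases hp.mem_or_mem hr with h' | h'
      · exact h'
      · exact absurd h' hcp

theorem ass_quot_finite [IsNoetherianRing R] (I : Submodule R R) :
    (associatedPrimes R (R ⧸ I)).Finite := by
  induction I using IsNoetherian.induction with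
  | _ I IH =>
  by_cases hs : Subsingleton (R ⧸ I)
  · rw [associatedPrimes.eq_empty_of_subsingleton]
    exact Set.finite_empty
  have : Nontrivial (R ⧸ I) := not_subsingleton_iff_nontrivial.mp hs
  obtain ⟨p, hp⟩ := associatedPrimes.nonempty R (R ⧸ I)
  obtain ⟨hprime, xb, hxb⟩ := iap_iff.mp hp
  have hxb0 : xb ≠ 0 := by
    rintro rfl
    rw [Submodule.span_zero_singleton, Submodule.annihilator_bot] at hxb
    exact hprime.ne_top hxb
  set S : Submodule R (R ⧸ I) := R ∙ xb with hS
  set J : Submodule R R := S.comap I.mkQ with hJ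
  have hIJ : I < J := by
    obtain ⟨x, hx⟩ := Submodule.mkQ_surjective I xb
    refine lt_of_le_of_ne (fun n hn => ?_) (fun he => ?_)
    · simp only [hJ, Submodule.mem_comap]
      rw [show I.mkQ n = 0 from (Submodule.Quotient.mk_eq_zero I).mpr hn]
      exact Submodule.zero_mem S
    · apply hxb0
      have hxJ : x ∈ J := by
        simp only [hJ, Submodule.mem_comap, hx]
        exact Submodule.mem_span_singleton_self xb
      rw [← he] at hxJ
      rw [← hx]
      exact (Submodule.Quotient.mk_eq_zero I).mpr hxJ
  have hfin2 : (associatedPrimes R ((R ⧸ I) ⧸ S)).Finite := by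
    have hle : I ≤ J := le_of_lt hIJ
    have hmap : J.map I.mkQ = S :=
      Submodule.map_comap_eq_of_surjective (Submodule.mkQ_surjective I) S
    have e : ((R ⧸ I) ⧸ S) ≃ₗ[R] R ⧸ J := by
      rw [← hmap]
      exact Submodule.quotientQuotientEquivQuotient I J hle
    rw [LinearEquiv.AssociatedPrimes.eq e]
    exact IH J hIJ
  have hfin1 : (associatedPrimes R S).Finite := by
    set f : R →ₗ[R] (R ⧸ I) := LinearMap.toSpanSingleton R (R ⧸ I) xb with hf
    have hker : LinearMap.ker f = p := by
      ext r
      rw [LinearMap.mem_ker, hxb, Submodule.mem_annihilator_span_singleton]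
      rfl
    have hrange : LinearMap.range f = S := (LinearMap.span_singleton_eq_range R _ xb).symm
    have e : (R ⧸ p) ≃ₗ[R] S := by
      rw [← hker, ← hrange]
      exact f.quotKerEquivRange
    rw [← LinearEquiv.AssociatedPrimes.eq e]
    have : p.IsPrimary := hprime.isPrimary
    rw [associatedPrimes.eq_singleton_of_isPrimary this, hprime.radical]
    exact Set.finite_singleton p
  exact Set.Finite.subset (hfin1.union hfin2) (ass_subset_union S)

theorem ass_finite [IsNoetherianRing R] : (associatedPrimes R R).Finite := by
  have e : (R ⧸ (⊥ : Submodule R R)) ≃ₗ[R] R := Submodule.quotEquivOfEqBot ⊥ rfl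
  rw [← LinearEquiv.AssociatedPrimes.eq e]
  exact ass_quot_finite ⊥

end Ass

section Socle
variable {A : Type*} [CommRing A] [IsLocalRing A]
variable {G₁ G₀ : Type*} [AddCommGroup G₁] [Module A G₁] [AddCommGroup G₀] [Module A G₀]
variable [Module.Free A G₁] [Module.Finite A G₁] [Module.Free A G₀] [Module.Finite A G₀]

theorem exists_retraction_of_socle (δ : G₁ →ₗ[A] G₀) (hδ : Function.Injective δ)
    (a : A) (ha : a ≠ 0) (hma : ∀ r ∈ IsLocalRing.maximalIdeal A, r * a = 0) :
    ∃ ρ : G₀ →ₗ[A] G₁, ρ ∘ₗ δ = LinearMap.id := by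
  rw [IsLocalRing.split_injective_iff_lTensor_residueField_injective]
  set k := IsLocalRing.ResidueField A
  -- the map θ : k →ₗ[A] A, r̄ ↦ r * a
  have hker : IsLocalRing.maximalIdeal A ≤ LinearMap.ker (LinearMap.toSpanSingleton A A a) := by
    intro r hr
    rw [LinearMap.mem_ker, LinearMap.toSpanSingleton_apply, smul_eq_mul]
    exact hma r hr
  set θ : k →ₗ[A] A := Submodule.liftQ _ (LinearMap.toSpanSingleton A A a) hker with hθ
  have hθ_apply : ∀ r : A, θ (Ideal.Quotient.mk _ r) = r * a := fun r => by
    rw [hθ]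
    erw [Submodule.liftQ_apply]
    rw [LinearMap.toSpanSingleton_apply, smul_eq_mul]
  have hθinj : Function.Injective θ := by
    rw [injective_iff_map_eq_zero]
    intro x hx
    obtain ⟨r, rfl⟩ := Submodule.Quotient.mk_surjective _ x
    rw [show (Submodule.Quotient.mk r : k) = Ideal.Quotient.mk _ r from rfl] at hx ⊢
    rw [hθ_apply] at hx
    refine (Ideal.Quotient.eq_zero_iff_mem).mpr ?_
    by_contra hrm
    have hu : IsUnit r := not_not.mp (fun h => hrm (IsLocalRing.mem_maximalIdeal r |>.mpr h))
    obtain ⟨u, rfl⟩ := hu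
    apply ha
    calc a = (↑u⁻¹ * ↑u) * a := by simp
    _ = ↑u⁻¹ * (↑u * a) := by ring
    _ = 0 := by rw [hx, mul_zero]
  -- injectivity of δ.lTensor k
  intro t t' htt
  have key : ∀ s : k ⊗[A] G₁, δ.lTensor k s = 0 → s = 0 := by
    intro s hs
    have h1 : (θ.rTensor G₀) (δ.lTensor k s) = (δ.lTensor A) (θ.rTensor G₁ s) := by
      rw [← LinearMap.comp_apply, ← LinearMap.comp_apply,
        LinearMap.rTensor_comp_lTensor, LinearMap.lTensor_comp_rTensor]
    have h2 : (δ.lTensor A) (θ.rTensor G₁ s) = 0 := by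
      rw [← h1, hs, map_zero]
    have hnat : ∀ z : A ⊗[A] G₁, (TensorProduct.lid A G₀) (δ.lTensor A z)
        = δ ((TensorProduct.lid A G₁) z) := by
      intro z
      induction z with
      | zero => simp
      | tmul r x => simp
      | add z₁ z₂ h₁ h₂ => simp [map_add, h₁, h₂]
    have h3 : δ ((TensorProduct.lid A G₁) (θ.rTensor G₁ s)) = 0 := by
      rw [← hnat, h2, map_zero]
    have h4 : (θ.rTensor G₁) s = 0 := by
      have := hδ (by rw [h3, map_zero] : δ ((TensorProduct.lid A G₁) (θ.rTensor G₁ s)) = δ 0)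
      exact (TensorProduct.lid A G₁).injective (by rw [this, map_zero])
    exact Module.Flat.rTensor_preserves_injective_linearMap θ hθinj
      (by rw [h4, map_zero])
  have := key (t - t') (by rw [map_sub, htt, sub_self])
  exact sub_eq_zero.mp this

end Socle

/-- torsion-free predicate matching the theorem's hypothesis -/
def TF (R M : Type*) [CommRing R] [AddCommGroup M] [Module R M] : Prop :=
  ∀ r : R, (∀ s : R, r * s = 0 → s = 0) → ∀ n : M, r • n = 0 → n = 0

section TFlemmas
variable {R : Type*} [CommRing R]

theorem tf_of_flat (X : Type*) [AddCommGroup X] [Module R X] [Module.Flat R X] : TF R X := by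
  intro r hr n hn
  set μ : R →ₗ[R] R := LinearMap.lsmul R R r with hμ
  have hμinj : Function.Injective μ := by
    rw [injective_iff_map_eq_zero]
    intro s hs
    exact hr s (by simpa [hμ, smul_eq_mul] using hs)
  have hrT : Function.Injective (μ.rTensor X) :=
    Module.Flat.rTensor_preserves_injective_linearMap μ hμinj
  have h1 : μ.rTensor X ((1 : R) ⊗ₜ[R] n) = r ⊗ₜ[R] n := by
    simp [hμ, LinearMap.rTensor_tmul, smul_eq_mul]
  have h2 : (TensorProduct.lid R X) (r ⊗ₜ[R] n) = 0 := by
    rw [TensorProduct.lid_tmul, hn]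
  have h3 : μ.rTensor X ((1 : R) ⊗ₜ[R] n) = 0 := by
    rw [h1]
    exact (TensorProduct.lid R X).map_eq_zero_iff.mp h2
  have h4 : (1 : R) ⊗ₜ[R] n = (0 : R ⊗[R] X) := hrT (by rw [h3, map_zero])
  have := congrArg (TensorProduct.lid R X) h4
  simpa using this

/-- torsion-freeness is kept by tensoring a flat module on the left -/
theorem tf_lTensor_smul {X N : Type*} [AddCommGroup X] [Module R X] [Module.Flat R X]
    [AddCommGroup N] [Module R N] (htf : TF R N)
    (r : R) (hr : ∀ s : R, r * s = 0 → s = 0) {y : X ⊗[R] N} (hy : r • y = 0) : y = 0 := by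
  set σ : N →ₗ[R] N := r • (LinearMap.id : N →ₗ[R] N) with hσ
  have hσinj : Function.Injective σ := by
    rw [injective_iff_map_eq_zero]
    intro n hn
    exact htf r hr n (by simpa [hσ] using hn)
  have hlt : Function.Injective (σ.lTensor X) :=
    Module.Flat.lTensor_preserves_injective_linearMap σ hσinj
  have hid : σ.lTensor X = r • (LinearMap.id : X ⊗[R] N →ₗ[R] X ⊗[R] N) := by
    apply TensorProduct.ext'
    intro x n
    simp [hσ, LinearMap.lTensor_tmul, tmul_smul]
  apply hlt
  rw [hid, map_zero]
  simpa using hy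

end TFlemmas

section Main
variable {R : Type*} [CommRing R] [IsNoetherianRing R]
variable {F₁ F₀ : Type*} [AddCommGroup F₁] [Module R F₁] [AddCommGroup F₀] [Module R F₀]
variable [Module.Free R F₁] [Module.Finite R F₁] [Module.Free R F₀] [Module.Finite R F₀]

theorem rTensor_injective_of_tf (d : F₁ →ₗ[R] F₀) (hd : Function.Injective d)
    {N : Type*} [AddCommGroup N] [Module R N] (htf : TF R N) :
    Function.Injective (d.rTensor N) := by
  rw [injective_iff_map_eq_zero]
  intro y hy
  by_contra hy0
  set I : Ideal R := (R ∙ y).annihilator with hI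
  -- every element of I is a zero divisor
  have hzd : ∀ r ∈ I, ∃ s : R, s ≠ 0 ∧ r * s = 0 := by
    intro r hr
    by_contra h
    push_neg at h
    have hreg : ∀ s : R, r * s = 0 → s = 0 := by
      intro s hs
      by_contra hs0
      exact h s hs0 hs
    have hry : r • y = 0 := by
      rw [hI] at hr
      rwa [Submodule.mem_annihilator_span_singleton] at hr
    exact hy0 (tf_lTensor_smul htf r hreg hry)
  -- prime avoidance: I ≤ q for some associated prime q of R
  have hfin : (associatedPrimes R R).Finite := ass_finite
  have hsub : (I : Set R) ⊆ ⋃ p ∈ hfin.toFinset, ↑(id p : Ideal R) := by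
    intro r hr
    obtain ⟨s, hs0, hs⟩ := hzd r hr
    have : r ∈ ⋃ p ∈ associatedPrimes R R, (p : Set R) := by
      rw [biUnion_associatedPrimes_eq_zero_divisors R R]
      exact ⟨s, hs0, by rwa [smul_eq_mul]⟩
    simp only [Set.mem_iUnion] at this ⊢
    obtain ⟨p, hp, hrp⟩ := this
    exact ⟨p, hfin.mem_toFinset.mpr hp, hrp⟩
  have hp : ∀ p ∈ hfin.toFinset, p ≠ (⊥ : Ideal R) → p ≠ (⊥ : Ideal R) → (id p : Ideal R).IsPrime :=
    fun p hps _ _ => (hfin.mem_toFinset.mp hps).isPrime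
  obtain ⟨q, hqs, hIq⟩ := (Ideal.subset_union_prime (⊥ : Ideal R) (⊥ : Ideal R) hp).mp hsub
  have hq : IsAssociatedPrime q R := hfin.mem_toFinset.mp hqs
  obtain ⟨hqprime, a, hqa⟩ := iap_iff.mp hq
  haveI : q.IsPrime := hqprime
  have hq_ann : ∀ r : R, r ∈ q ↔ r * a = 0 := by
    intro r
    rw [hqa, Submodule.mem_annihilator_span_singleton, smul_eq_mul]
  have ha0 : a ≠ 0 := by
    rintro rfl
    rw [Submodule.span_zero_singleton, Submodule.annihilator_bot] at hqa
    exact hqprime.ne_top hqa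
  -- localize at q
  set A := Localization.AtPrime q with hA
  set a' : A := algebraMap R A a with ha'def
  have ha' : a' ≠ 0 := by
    intro h
    rw [ha'def, IsLocalization.map_eq_zero_iff q.primeCompl] at h
    obtain ⟨m, hm⟩ := h
    exact m.2 ((hq_ann m.1).mpr hm)
  have hma' : ∀ r ∈ IsLocalRing.maximalIdeal A, r * a' = 0 := by
    intro r hr
    obtain ⟨⟨x, m⟩, rfl⟩ := IsLocalization.mk'_surjective q.primeCompl r
    have hx : x ∈ q := (IsLocalization.AtPrime.mk'_mem_maximal_iff A q x m).mp hr
    have hxa : x * a = 0 := (hq_ann x).mp hx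
    rw [ha'def, ← IsLocalization.mk'_one (M := q.primeCompl) A a, ← IsLocalization.mk'_mul A,
      hxa, IsLocalization.mk'_zero]
  -- base change of d to A
  set dA : A ⊗[R] F₁ →ₗ[A] A ⊗[R] F₀ := d.baseChange A with hdA_def
  have hdA : Function.Injective dA := by
    have h := Module.Flat.lTensor_preserves_injective_linearMap (M := A) d hd
    rwa [hdA_def, show ⇑(d.baseChange A) = ⇑(d.lTensor A) from LinearMap.baseChange_eq_ltensor d]
  obtain ⟨ρ, hρ⟩ := exists_retraction_of_socle dA hdA a' ha' hma'
  -- descend ρ to a map φ : F₀ →ₗ[R] F₁ with φ ∘ d = c • id, c ∉ q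
  set ℓ₁ : F₁ →ₗ[R] A ⊗[R] F₁ := TensorProduct.mk R A F₁ 1 with hℓ₁
  set ℓ₀ : F₀ →ₗ[R] A ⊗[R] F₀ := TensorProduct.mk R A F₀ 1 with hℓ₀
  haveI hloc : IsLocalizedModule q.primeCompl ℓ₁ :=
    (isLocalizedModule_iff_isBaseChange q.primeCompl A ℓ₁).mpr (TensorProduct.isBaseChange R F₁ A)
  set bι := Module.Free.chooseBasis R F₀ with hbι
  set bκ := Module.Free.chooseBasis R F₁ with hbκ
  have hsurj := fun j => IsLocalizedModule.surj q.primeCompl ℓ₁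
    ((ρ.restrictScalars R) (ℓ₀ (bι j)))
  choose xs hxs using hsurj
  set s : q.primeCompl := ∏ j, (xs j).2 with hs
  set ψ : F₀ →ₗ[R] F₁ :=
    bι.constr R (fun j => (∏ k ∈ Finset.univ.erase j, ((xs k).2 : R)) • (xs j).1) with hψ
  have hψs : ∀ v : F₀, ℓ₁ (ψ v) = (s : R) • (ρ.restrictScalars R) (ℓ₀ v) := by
    have heq : ℓ₁ ∘ₗ ψ = (s : R) • ((ρ.restrictScalars R) ∘ₗ ℓ₀) := by
      apply bι.ext
      intro j
      have h1 := hxs j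
      rw [Submonoid.smul_def] at h1
      simp only [LinearMap.comp_apply, hψ, Module.Basis.constr_basis, map_smul,
        LinearMap.smul_apply]
      rw [← h1, smul_smul, Finset.prod_erase_mul _ _ (Finset.mem_univ j), hs]
      norm_cast
    intro v
    exact LinearMap.congr_fun heq v
  have hcomm : ∀ v : F₁, ℓ₀ (d v) = dA (ℓ₁ v) := by
    intro v
    simp [hℓ₀, hℓ₁, hdA_def, TensorProduct.mk_apply, LinearMap.baseChange_tmul]
  have key1 : ∀ v : F₁, ℓ₁ (ψ (d v) - (s : R) • v) = 0 := by
    intro v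
    rw [map_sub, map_smul, hψs, hcomm]
    have : (ρ.restrictScalars R) (dA (ℓ₁ v)) = ℓ₁ v := by
      have := LinearMap.congr_fun hρ (ℓ₁ v)
      simpa using this
    rw [this, sub_self]
  have key2 := fun k => (IsLocalizedModule.eq_zero_iff q.primeCompl (f := ℓ₁)).mp (key1 (bκ k))
  choose ts hts using key2
  set T : q.primeCompl := ∏ k, ts k with hT
  set c : q.primeCompl := T * s with hc
  set φ : F₀ →ₗ[R] F₁ := (T : R) • ψ with hφ
  have hφd : φ ∘ₗ d = (c : R) • (LinearMap.id : F₁ →ₗ[R] F₁) := by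
    apply bκ.ext
    intro k
    have h1 := hts k
    rw [Submonoid.smul_def] at h1
    have h2 : ((∏ l ∈ Finset.univ.erase k, ((ts l) : R)) * (ts k : R)) •
        (ψ (d (bκ k)) - (s : R) • bκ k) = 0 := by
      rw [mul_smul, h1, smul_zero]
    rw [Finset.prod_erase_mul _ _ (Finset.mem_univ k)] at h2
    have h3 : (T : R) • (ψ (d (bκ k)) - (s : R) • bκ k) = 0 := by
      rw [hT]
      push_cast
      exact h2
    rw [smul_sub, sub_eq_zero] at h3
    simp only [LinearMap.comp_apply, hφ, LinearMap.smul_apply, LinearMap.id_apply]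
    rw [h3, smul_smul, hc]
    push_cast
    ring_nf
  -- conclude
  have hcy : (c : R) • y = 0 := by
    have h1 : (φ.rTensor N) ((d.rTensor N) y) = ((φ ∘ₗ d).rTensor N) y := by
      rw [LinearMap.rTensor_comp, LinearMap.comp_apply]
    have h2 : ((c : R) • (LinearMap.id : F₁ →ₗ[R] F₁)).rTensor N
        = (c : R) • (LinearMap.id : F₁ ⊗[R] N →ₗ[R] F₁ ⊗[R] N) := by
      apply TensorProduct.ext'
      intro m n
      simp [LinearMap.rTensor_tmul, smul_tmul']
    rw [hy, map_zero] at h1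
    rw [hφd, h2] at h1
    simpa using h1.symm
  have : (c : R) ∈ I := by
    rw [hI, Submodule.mem_annihilator_span_singleton]
    exact hcy
  exact c.2 (hIq this)

end Main

section Chase
variable {R : Type*} [CommRing R]
variable {A B C M F₁ F₀ : Type*}
variable [AddCommGroup A] [Module R A] [AddCommGroup B] [Module R B]
variable [AddCommGroup C] [Module R C] [AddCommGroup M] [Module R M]
variable [AddCommGroup F₁] [Module R F₁] [AddCommGroup F₀] [Module R F₀]
variable [Module.Flat R F₀]

/-- Balancing of Tor₁ by hand: given a short exact sequence `0 → A → B → C → 0`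
and a resolution `F₁ → F₀ → M → 0` with `F₀` flat and `F₁ ⊗ C → F₀ ⊗ C` injective,
the map `M ⊗ A → M ⊗ B` is injective. -/
theorem lTensor_injective_chase
    (f : A →ₗ[R] B) (g : B →ₗ[R] C) (hf : Function.Injective f)
    (hg : Function.Surjective g) (hfg : Function.Exact f g)
    (d : F₁ →ₗ[R] F₀) (ε : F₀ →ₗ[R] M) (hε : Function.Surjective ε)
    (hdε : Function.Exact d ε)
    (hC : Function.Injective (d.rTensor C)) :
    Function.Injective (f.lTensor M) := by
  rw [injective_iff_map_eq_zero]
  intro t ht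
  -- lift t to u : F₀ ⊗ A
  obtain ⟨u, hu⟩ := LinearMap.rTensor_surjective A hε t
  -- u' : F₀ ⊗ B
  set u' : F₀ ⊗[R] B := f.lTensor F₀ u with hu'
  have hu'0 : ε.rTensor B u' = 0 := by
    have : ε.rTensor B ∘ₗ f.lTensor F₀ = f.lTensor M ∘ₗ ε.rTensor A := by
      rw [LinearMap.rTensor_comp_lTensor, LinearMap.lTensor_comp_rTensor]
    rw [hu', ← LinearMap.comp_apply, this, LinearMap.comp_apply, hu, ht]
  -- u' is in the image of F₁ ⊗ B
  have hexB : Function.Exact (d.rTensor B) (ε.rTensor B) :=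
    rTensor_exact B hdε hε
  obtain ⟨v, hv⟩ := (hexB u').mp hu'0
  -- push v to F₁ ⊗ C : it dies
  have hvC : d.rTensor C (g.lTensor F₁ v) = 0 := by
    have hcomm : d.rTensor C ∘ₗ g.lTensor F₁ = g.lTensor F₀ ∘ₗ d.rTensor B := by
      rw [LinearMap.rTensor_comp_lTensor, LinearMap.lTensor_comp_rTensor]
    rw [← LinearMap.comp_apply, hcomm, LinearMap.comp_apply, hv, hu']
    have hgf : g ∘ₗ f = 0 := LinearMap.ext fun a => hfg.apply_apply_eq_zero a
    rw [← LinearMap.comp_apply, ← LinearMap.lTensor_comp, hgf, LinearMap.lTensor_zero,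
      LinearMap.zero_apply]
  have hv0 : g.lTensor F₁ v = 0 := by
    apply hC
    rw [hvC, map_zero]
  -- v comes from F₁ ⊗ A
  have hexF₁ : Function.Exact (f.lTensor F₁) (g.lTensor F₁) :=
    lTensor_exact F₁ hfg hg
  obtain ⟨w, hw⟩ := (hexF₁ v).mp hv0
  -- d ⊗ A w = u by flatness of F₀
  have hdw : d.rTensor A w = u := by
    apply Module.Flat.lTensor_preserves_injective_linearMap (M := F₀) f hf
    have hcomm : f.lTensor F₀ ∘ₗ d.rTensor A = d.rTensor B ∘ₗ f.lTensor F₁ := by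
      rw [LinearMap.rTensor_comp_lTensor, LinearMap.lTensor_comp_rTensor]
    rw [← LinearMap.comp_apply, hcomm, LinearMap.comp_apply, hw, hv, hu']
  -- conclude
  have hεd : ε ∘ₗ d = 0 := LinearMap.ext fun a => hdε.apply_apply_eq_zero a
  rw [← hu, ← hdw, ← LinearMap.comp_apply, ← LinearMap.rTensor_comp, hεd,
    LinearMap.rTensor_zero, LinearMap.zero_apply]

end Chase


section E1
variable {R : Type*} [CommRing R]

/-- torsion-freeness of quotients embedding into torsion-free modules -/
theorem tf_quot_ker {X Y : Type*} [AddCommGroup X] [Module R X] [AddCommGroup Y] [Module R Y]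
    (h : X →ₗ[R] Y) (htfY : TF R Y) : TF R (X ⧸ LinearMap.ker h) := by
  intro r hr n hn
  obtain ⟨x, rfl⟩ := Submodule.mkQ_surjective _ n
  rw [← map_smul, Submodule.mkQ_apply, Submodule.Quotient.mk_eq_zero] at hn
  rw [Submodule.mkQ_apply, Submodule.Quotient.mk_eq_zero]
  rw [LinearMap.mem_ker] at hn ⊢
  apply htfY r hr
  rw [← map_smul, hn]

theorem tf_equiv {X Y : Type*} [AddCommGroup X] [Module R X] [AddCommGroup Y] [Module R Y]
    (e : X ≃ₗ[R] Y) (htfY : TF R Y) : TF R X := by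
  intro r hr n hn
  apply e.injective
  rw [map_zero]
  apply htfY r hr
  rw [← map_smul, hn, map_zero]

theorem exact_lTensor_of_inj {X₂ X₁ X₀ M : Type*}
    [AddCommGroup X₂] [Module R X₂] [AddCommGroup X₁] [Module R X₁]
    [AddCommGroup X₀] [Module R X₀] [AddCommGroup M] [Module R M]
    (δ₂ : X₂ →ₗ[R] X₁) (δ₁ : X₁ →ₗ[R] X₀) (hex : Function.Exact δ₂ δ₁)
    (hinj : Function.Injective ((LinearMap.range δ₁).subtype.lTensor M)) :
    Function.Exact (δ₂.lTensor M) (δ₁.lTensor M) := by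
  set ι : LinearMap.ker δ₁ →ₗ[R] X₁ := (LinearMap.ker δ₁).subtype with hι
  set δ₁' : X₁ →ₗ[R] LinearMap.range δ₁ := δ₁.rangeRestrict with hδ₁'
  have hfac : (LinearMap.range δ₁).subtype ∘ₗ δ₁' = δ₁ := by
    ext x; rfl
  have hexι : Function.Exact ι δ₁' := by
    rw [LinearMap.exact_iff, LinearMap.ker_rangeRestrict, hι, Submodule.range_subtype]
  have hsurj' : Function.Surjective δ₁' := LinearMap.surjective_rangeRestrict δ₁
  have hex1 : Function.Exact (ι.lTensor M) (δ₁'.lTensor M) := lTensor_exact M hexι hsurj'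
  have hmem : ∀ x, δ₂ x ∈ LinearMap.ker δ₁ := fun x => by
    rw [LinearMap.mem_ker]; exact hex.apply_apply_eq_zero x
  set δ₂'' : X₂ →ₗ[R] LinearMap.ker δ₁ := δ₂.codRestrict (LinearMap.ker δ₁) hmem with hδ₂''
  have hsurj'' : Function.Surjective δ₂'' := by
    rintro ⟨z, hz⟩
    obtain ⟨w, hw⟩ := (hex z).mp hz
    exact ⟨w, Subtype.ext hw⟩
  have hfac2 : ι ∘ₗ δ₂'' = δ₂ := by
    ext x; rfl
  intro y
  constructor
  · intro hy
    have h1 : ((LinearMap.range δ₁).subtype.lTensor M) ((δ₁'.lTensor M) y) = 0 := by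
      rw [← LinearMap.comp_apply, ← LinearMap.lTensor_comp, hfac, hy]
    have h2 : (δ₁'.lTensor M) y = 0 := by
      apply hinj; rw [h1, map_zero]
    obtain ⟨w, hw⟩ := (hex1 y).mp h2
    obtain ⟨w', hw'⟩ := LinearMap.lTensor_surjective M hsurj'' w
    refine ⟨w', ?_⟩
    rw [← hfac2, LinearMap.lTensor_comp, LinearMap.comp_apply, hw', hw]
  · rintro ⟨w, rfl⟩
    rw [← LinearMap.comp_apply, ← LinearMap.lTensor_comp]
    have : δ₁ ∘ₗ δ₂ = 0 := LinearMap.ext fun x => hex.apply_apply_eq_zero x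
    rw [this, LinearMap.lTensor_zero, LinearMap.zero_apply]

end E1

/-- over a Noetherian local ring `R`, if `M` is finitely generated with
`pd_R M = 1` (witnessed by a free resolution `0 → F₁ → F₀ → M → 0` with `M` not projective)
and `N` is finitely generated torsion-free, then `Tor_i^R(M,N) = 0` for all `i ≥ 1`. -/
theorem stmt3 (R : Type) [CommRing R] [IsNoetherianRing R] [IsLocalRing R]
    (M N : Type) [AddCommGroup M] [Module R M] [Module.Finite R M]
    [AddCommGroup N] [Module R N] [Module.Finite R N]
    -- pd_R(M) = 1 :
    (F₀ F₁ : Type) [AddCommGroup F₀] [Module R F₀] [AddCommGroup F₁] [Module R F₁]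
    [Module.Free R F₀] [Module.Finite R F₀] [Module.Free R F₁] [Module.Finite R F₁]
    (d : F₁ →ₗ[R] F₀) (ε : F₀ →ₗ[R] M)
    (hd : Function.Injective d) (hε : Function.Surjective ε) (hex : Function.Exact d ε)
    (hnotproj : ¬ Module.Projective R M)
    -- N torsion-free :
    (htf : ∀ r : R, (∀ s : R, r * s = 0 → s = 0) → ∀ n : N, r • n = 0 → n = 0) :
    ∀ i : ℕ, 1 ≤ i →
      Subsingleton (TorGroup R i (ModuleCat.of R M) (ModuleCat.of R N)) := by
  intro i hi
  obtain ⟨n, rfl⟩ : ∃ n, i = n + 1 := ⟨i - 1, (Nat.succ_pred_eq_of_pos hi).symm⟩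
  set M' : ModuleCat.{0} R := ModuleCat.of R M with hM'
  set N' : ModuleCat.{0} R := ModuleCat.of R N with hN'
  set F : ModuleCat.{0} R ⥤ ModuleCat.{0} R := (tensoringLeft (ModuleCat.{0} R)).obj M' with hF
  let P : ProjectiveResolution N' := (HasProjectiveResolution.out (Z := N')).some
  set K := (F.mapHomologicalComplex (ComplexShape.down ℕ)).obj P.complex with hK
  -- module-level instances for the resolution
  haveI hproj : ∀ m : ℕ, Module.Projective R (P.complex.X m) := fun m =>
    (IsProjective.iff_projective (R := R) (P.complex.X m)).mpr (P.projective m)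
  -- the resolution is exact in positive degrees
  have hres : ∀ m : ℕ, Function.Exact (P.complex.d (m+2) (m+1)) (P.complex.d (m+1) m) := by
    intro m
    have h1 := P.complex_exactAt_succ m
    rw [HomologicalComplex.exactAt_iff' P.complex (m+2) (m+1) m
      ((ComplexShape.down ℕ).prev_eq' (by simp)) ((ComplexShape.down ℕ).next_eq' (by simp))] at h1
    exact (ShortComplex.ShortExact.moduleCat_exact_iff_function_exact _).mp h1
  -- exactness at degree 0
  have hπex : Function.Exact (P.complex.d 1 0) (P.π.f 0) :=
    (ShortComplex.ShortExact.moduleCat_exact_iff_function_exact _).mp P.exact₀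
  have hπsurj : Function.Surjective (P.π.f 0) :=
    (ModuleCat.epi_iff_surjective _).mp inferInstance
  -- torsion-freeness of the cokernels X n / range (d (n+1) n)
  have htfC : ∀ m : ℕ, TF R ((P.complex.X m) ⧸ LinearMap.range (P.complex.d (m+1) m).hom) := by
    intro m
    match m with
    | 0 =>
      have hker : LinearMap.range (P.complex.d 1 0).hom = LinearMap.ker (P.π.f 0).hom :=
        (LinearMap.exact_iff.mp hπex).symm
      rw [hker]
      exact tf_equiv (LinearMap.quotKerEquivOfSurjective _ hπsurj) htf
    | m + 1 =>
      have hker : LinearMap.range (P.complex.d (m+2) (m+1)).hom =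
          LinearMap.ker (P.complex.d (m+1) m).hom := (LinearMap.exact_iff.mp (hres m)).symm
      rw [hker]
      exact tf_quot_ker _ (tf_of_flat _)
  -- main exactness of the tensored complex
  have hmain : Function.Exact ((P.complex.d (n+2) (n+1)).hom.lTensor M)
      ((P.complex.d (n+1) n).hom.lTensor M) := by
    apply exact_lTensor_of_inj _ _ (hres n)
    apply lTensor_injective_chase (LinearMap.range (P.complex.d (n+1) n).hom).subtype
      (LinearMap.range (P.complex.d (n+1) n).hom).mkQ (Submodule.injective_subtype _)
      (Submodule.mkQ_surjective _) (LinearMap.exact_subtype_mkQ _) d ε hε hex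
    exact rTensor_injective_of_tf d hd (htfC n)
  -- translate to categorical exactness
  have hEx : K.ExactAt (n+1) := by
    rw [HomologicalComplex.exactAt_iff' K (n+2) (n+1) n
      ((ComplexShape.down ℕ).prev_eq' (by simp)) ((ComplexShape.down ℕ).next_eq' (by simp))]
    rw [ShortComplex.ShortExact.moduleCat_exact_iff_function_exact]
    exact hmain
  have hIsZero : IsZero (K.homology (n+1)) :=
    (HomologicalComplex.exactAt_iff_isZero_homology K (n+1)).mp hEx
  have e := P.isoLeftDerivedObj F (n+1)
  have hz : IsZero ((F.leftDerived (n+1)).obj N') := by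
    apply Limits.IsZero.of_iso _ e
    exact hIsZero
  have hz' : IsZero (TorGroup R (n+1) M' N') := hz
  refine ⟨fun x y => ?_⟩
  have h0 : (𝟙 (TorGroup R (n+1) M' N') : _ ⟶ _) = 0 := hz'.eq_of_src _ _
  have hx : ∀ z : TorGroup R (n+1) M' N', z = 0 := fun z => by
    have := congrFun (congrArg (fun (f : TorGroup R (n+1) M' N' ⟶ TorGroup R (n+1) M' N')
      => (f : TorGroup R (n+1) M' N' → TorGroup R (n+1) M' N')) h0) z
    simpa using this
  rw [hx x, hx y]

end
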